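/- arXiv:2006.15630 — 4 statements merged into one kernel-verified Lean document; each statement's English description precedes it below -/
import Mathlib

section
/- Let G be a simple graph that is acyclic. Suppose a, b, b' are vertices of G with G.Adj a b and G.Adj a b', and b ≠ b'. Then for every path p in G from b to b', the vertex a lies in the support of p. -/
/-- In an acyclic simple graph, if `a` is adjacent to both `b` and `b'` with `b ≠ b'`,
then `a` lies on the support of every path from `b` to `b'`. -/
theorem acyclic_adj_mem_path_support {V : Type*} (G : SimpleGraph V)
    (hG : G.IsAcyclic) (a b b' : V) (hab : G.Adj a b) (hab' : G.Adj a b')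
    (hbb' : b ≠ b') (p : G.Walk b b') (hp : p.IsPath) :
    a ∈ p.support := by
  by_contra ha
  set q : G.Walk b a := (SimpleGraph.Walk.cons hab' p.reverse).reverse with hq
  have hqpath : q.IsPath := by
    apply SimpleGraph.Walk.IsPath.reverse
    refine (hp.reverse).cons ?_
    simpa using ha
  have hcyc : (SimpleGraph.Walk.cons hab q).IsCycle := by
    rw [SimpleGraph.Walk.cons_isCycle_iff]
    refine ⟨hqpath, ?_⟩
    intro he
    rw [hq, SimpleGraph.Walk.edges_reverse, List.mem_reverse,
      SimpleGraph.Walk.edges_cons, List.mem_cons] at he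
    rcases he with he | he
    · rcases Sym2.eq_iff.mp he with ⟨h1, h2⟩ | ⟨h1, h2⟩
      · exact hbb' h2
      · subst h1
        exact ha (SimpleGraph.Walk.end_mem_support p)
    · rw [SimpleGraph.Walk.edges_reverse, List.mem_reverse] at he
      exact ha (SimpleGraph.Walk.fst_mem_support_of_mem_edges p he)
  exact hG _ hcyc
end

section
/- Let G be a connected acyclic simple graph (a tree), let a be a vertex, and let S be a finite nonempty set of vertices with a ∉ S, such that for all s₁, s₂ ∈ S, the vertex a does not lie on the path from s₁ to s₂. Then there exists a unique vertex b adjacent to a such that for every s ∈ S, b lies on the support of the path from a to s. -/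
open SimpleGraph Walk

private lemma getVert_one_takeUntil' {V : Type*} {G : SimpleGraph V} [DecidableEq V]
    {a s c : V} (p : G.Walk a s) (h : c ∈ p.support) (hca : c ≠ a) :
    (p.takeUntil c h).getVert 1 = p.getVert 1 := by
  conv_rhs => rw [← p.take_spec h]
  rw [Walk.getVert_append]
  have hlen : (p.takeUntil c h).length ≠ 0 := fun h0 =>
    hca (Walk.eq_of_length_eq_zero h0).symm
  rcases Nat.lt_or_ge 1 (p.takeUntil c h).length with hlt | hge
  · rw [if_pos hlt]
  · have h1 : (p.takeUntil c h).length = 1 := le_antisymm hge (Nat.one_le_iff_ne_zero.2 hlen)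
    rw [if_neg (by omega)]
    rw [h1]
    simp [Walk.getVert_zero, ← h1, Walk.getVert_length]

/-- In a tree, if `a` does not lie on any path between elements of a finite nonempty
set `S` of vertices not containing `a`, then there is a unique neighbor `b` of `a`
through which every path from `a` to an element of `S` passes. -/
theorem tree_gateway_vertex {V : Type*} (G : SimpleGraph V)
    (hconn : G.Connected) (hacyc : G.IsAcyclic) (a : V) (S : Finset V)
    (hSne : S.Nonempty) (haS : a ∉ S)
    (hpath : ∀ s₁ ∈ S, ∀ s₂ ∈ S, ∀ (p : G.Walk s₁ s₂), p.IsPath → a ∉ p.support) :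
    ∃! b : V, G.Adj a b ∧ ∀ s ∈ S, ∀ (p : G.Walk a s), p.IsPath → b ∈ p.support := by
  classical
  obtain ⟨s₀, hs₀⟩ := hSne
  have has₀ : a ≠ s₀ := fun h => haS (h ▸ hs₀)
  obtain ⟨w⟩ := hconn a s₀
  set p₀ : G.Walk a s₀ := (w.toPath : G.Path a s₀).1 with hp₀def
  have hp₀ : p₀.IsPath := (w.toPath : G.Path a s₀).2
  have hlen₀ : p₀.length ≠ 0 := fun h0 => has₀ (Walk.eq_of_length_eq_zero h0)
  set b : V := p₀.getVert 1 with hbdef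
  have hab : G.Adj a b := by
    have := p₀.adj_getVert_succ (i := 0) (Nat.pos_of_ne_zero hlen₀)
    simpa [Walk.getVert_zero] using this
  -- key: every path from a to an element of S has second vertex b
  have key : ∀ s ∈ S, ∀ p : G.Walk a s, p.IsPath → p.getVert 1 = b := by
    intro s hs p hp
    by_cases hc : ∃ c, c ≠ a ∧ c ∈ p.support ∧ c ∈ p₀.support
    · obtain ⟨c, hca, hcp, hcp₀⟩ := hc
      have ht1 : (p.takeUntil c hcp).IsPath := hp.takeUntil hcp
      have ht2 : (p₀.takeUntil c hcp₀).IsPath := hp₀.takeUntil hcp₀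
      have := hacyc.path_unique ⟨p.takeUntil c hcp, ht1⟩ ⟨p₀.takeUntil c hcp₀, ht2⟩
      have heq : p.takeUntil c hcp = p₀.takeUntil c hcp₀ := congrArg Subtype.val this
      have e1 := getVert_one_takeUntil' p hcp hca
      have e2 := getVert_one_takeUntil' p₀ hcp₀ hca
      rw [← e1, heq, e2]
    · -- supports intersect only in a; build a path from s to s₀ through a
      push_neg at hc
      exfalso
      have hnodup : (p.reverse.append p₀).support.Nodup := by
        rw [Walk.support_append]
        refine List.Nodup.append ?_ ?_ ?_
        · simpa [Walk.support_reverse] using hp.support_nodup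
        · exact hp₀.support_nodup.tail
        · intro v hv hv'
          have hvp : v ∈ p.support := by
            rw [Walk.support_reverse] at hv; exact List.mem_reverse.mp hv
          have hvp₀ : v ∈ p₀.support := List.mem_of_mem_tail hv'
          rcases eq_or_ne v a with rfl | hne
          · have := hp₀.support_nodup
            rw [Walk.support_eq_cons p₀] at this
            exact (List.nodup_cons.mp this).1 hv'
          · exact hc v hne hvp hvp₀
      have hwpath : (p.reverse.append p₀).IsPath := Walk.IsPath.mk' hnodup
      have hamem : a ∈ (p.reverse.append p₀).support := by
        rw [Walk.support_append]
        exact List.mem_append_left _ (by simp [Walk.support_reverse])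
      exact hpath s hs s₀ hs₀ _ hwpath hamem
  refine ⟨b, ⟨hab, ?_⟩, ?_⟩
  · intro s hs p hp
    rw [← key s hs p hp]
    rw [Walk.mem_support_iff_exists_getVert]
    have hlen : p.length ≠ 0 := by
      intro h0
      have : a = s := Walk.eq_of_length_eq_zero h0
      exact haS (this ▸ hs)
    exact ⟨1, rfl, Nat.one_le_iff_ne_zero.2 hlen⟩
  · rintro b' ⟨hab', hb'⟩
    have hb'a : b' ≠ a := fun h => (h ▸ hab').ne' rfl
    have hmem : b' ∈ p₀.support := hb' s₀ hs₀ p₀ hp₀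
    have hedge : (Walk.cons hab' Walk.nil : G.Walk a b').IsPath := by
      simp [Walk.isPath_def, hab'.ne]
    have ht : (p₀.takeUntil b' hmem).IsPath := hp₀.takeUntil hmem
    have := hacyc.path_unique ⟨p₀.takeUntil b' hmem, ht⟩ ⟨Walk.cons hab' Walk.nil, hedge⟩
    have heq : p₀.takeUntil b' hmem = Walk.cons hab' Walk.nil := congrArg Subtype.val this
    have e := getVert_one_takeUntil' p₀ hmem hb'a
    rw [heq] at e
    simpa [hbdef] using e
end

section
/- Let G be a connected acyclic simple graph in which every vertex has countably infinite degree (the neighbor set of every vertex is countably infinite). Then for every vertex b and any two vertices a, a' adjacent to b, there exists a graph automorphism f of G with f b = b and f a = a'. -/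
/-!
Root the tree at `b`. Every vertex `v` has countably infinitely many children (neighbours one
step farther from `b`): all its neighbours if `v = b`, all but its unique parent otherwise.
Enumerating the children of every vertex by `ℕ` identifies the tree, with `b` at the root, with
the tree of finite lists of naturals, where `n :: l` is a child of `l`. There, applying a
transposition of `ℕ` to the last entry of every list is an automorphism fixing the root and
exchanging any two given neighbours of it.
-/

namespace SimpleGraph

/-- `n :: l` is a child of `l`, so `[]` is the root and the last entry of a nonempty list
names the branch at the root that contains it. -/
def listTree (α : Type*) : SimpleGraph (List α) where
  Adj x y := (∃ n, x = n :: y) ∨ ∃ n, y = n :: x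
  symm := ⟨fun _ _ => Or.symm⟩
  loopless := ⟨fun _ h => by
    rcases h with ⟨n, h⟩ | ⟨n, h⟩ <;> exact List.cons_ne_self n _ h.symm⟩

namespace listTree

variable {α : Type*}

lemma adj_nil_iff {l : List α} : (listTree α).Adj [] l ↔ ∃ n, l = [n] := by
  simp [listTree]

def mapLast (f : α → α) : List α → List α
  | [] => []
  | [n] => [f n]
  | n :: m :: l => n :: mapLast f (m :: l)

lemma mapLast_cons_of_ne_nil (f : α → α) (n : α) {l : List α} (hl : l ≠ []) :
    mapLast f (n :: l) = n :: mapLast f l := by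
  obtain ⟨m, l, rfl⟩ := List.exists_cons_of_ne_nil hl
  rfl

lemma mapLast_eq_nil_iff {f : α → α} {l : List α} : mapLast f l = [] ↔ l = [] := by
  rcases l with _ | ⟨n, _ | ⟨m, l⟩⟩ <;> simp [mapLast]

lemma leftInverse_mapLast {f g : α → α} (h : Function.LeftInverse f g) :
    Function.LeftInverse (mapLast f) (mapLast g)
  | [] => rfl
  | [n] => by simp [mapLast, h n]
  | n :: m :: l => by
    have hml : m :: l ≠ [] := List.cons_ne_nil m l
    rw [mapLast_cons_of_ne_nil g n hml,
      mapLast_cons_of_ne_nil f n (mt mapLast_eq_nil_iff.1 hml), leftInverse_mapLast h (m :: l)]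

lemma adj_mapLast (f : α → α) {x y : List α} (h : (listTree α).Adj x y) :
    (listTree α).Adj (mapLast f x) (mapLast f y) := by
  rcases h with ⟨n, rfl⟩ | ⟨n, rfl⟩
  · rcases y with _ | ⟨m, t⟩
    · exact Or.inl ⟨f n, rfl⟩
    · exact Or.inl ⟨n, rfl⟩
  · rcases x with _ | ⟨m, t⟩
    · exact Or.inr ⟨f n, rfl⟩
    · exact Or.inr ⟨n, rfl⟩

def permRoot (π : Equiv.Perm α) : listTree α ≃g listTree α where
  toFun := mapLast π
  invFun := mapLast π.symm
  left_inv := leftInverse_mapLast π.symm_apply_apply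
  right_inv := leftInverse_mapLast π.apply_symm_apply
  map_rel_iff' {x y} := by
    change (listTree α).Adj (mapLast π x) (mapLast π y) ↔ _
    refine ⟨fun h => ?_, adj_mapLast π⟩
    simpa only [leftInverse_mapLast π.symm_apply_apply _] using adj_mapLast π.symm h

lemma exists_iso_of_adj_nil {x y : List α} (hx : (listTree α).Adj [] x)
    (hy : (listTree α).Adj [] y) :
    ∃ f : listTree α ≃g listTree α, f [] = [] ∧ f x = y := by
  classical
  obtain ⟨m, rfl⟩ := adj_nil_iff.1 hx
  obtain ⟨n, rfl⟩ := adj_nil_iff.1 hy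
  exact ⟨permRoot (Equiv.swap m n), rfl, congrArg ([·]) (Equiv.swap_apply_left m n)⟩

end listTree

variable {V : Type*} {G : SimpleGraph V}

def childSet (G : SimpleGraph V) (b v : V) : Set V :=
  {w | G.Adj v w ∧ G.dist b w = G.dist b v + 1}

lemma childSet_self (b : V) : G.childSet b b = G.neighborSet b := by
  ext w
  simp [childSet]

lemma Connected.exists_mem_childSet (hG : G.Connected) {b v : V} (hv : v ≠ b) :
    ∃ u, v ∈ G.childSet b u := by
  obtain ⟨p, -, hp⟩ := hG.exists_path_of_dist b v
  have hnil : ¬p.Nil := Walk.not_nil_of_ne hv.symm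
  have hadj := Walk.adj_penultimate hnil
  refine ⟨p.penultimate, hadj, ?_⟩
  have h₁ := dist_le p.dropLast
  have h₂ := Walk.length_dropLast_add_one hnil
  have h₃ : G.dist b v ≤ G.dist b p.penultimate + G.dist p.penultimate v := hG.dist_triangle
  rw [dist_eq_one_iff_adj.2 hadj] at h₃
  omega

lemma IsTree.eq_penultimate_of_mem_childSet (hG : G.IsTree) {b u v : V} {p : G.Walk b v}
    (hp : p.IsPath) (hv : v ∈ G.childSet b u) : u = p.penultimate := by
  classical
  obtain ⟨q, hq, hql⟩ := hG.connected.exists_path_of_dist b u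
  have hvq : v ∉ q.support := fun hvq => by
    have := (dist_le (q.takeUntil v hvq)).trans (q.length_takeUntil_le_length hvq)
    have := hv.2
    omega
  exact hG.isAcyclic.eq_penultimate_of_adj_end hp hv.1.symm
    (hG.isAcyclic.mem_support_of_ne_mem_support_of_adj_of_isPath hp hq hv.1.symm hvq)

lemma IsTree.eq_of_mem_childSet (hG : G.IsTree) {b u₁ u₂ v : V} (h₁ : v ∈ G.childSet b u₁)
    (h₂ : v ∈ G.childSet b u₂) : u₁ = u₂ := by
  obtain ⟨p, hp, -⟩ := hG.connected.exists_path_of_dist b v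
  rw [hG.eq_penultimate_of_mem_childSet hp h₁, hG.eq_penultimate_of_mem_childSet hp h₂]

lemma IsTree.childSet_eq_of_mem_childSet (hG : G.IsTree) {b u v : V} (hv : v ∈ G.childSet b u) :
    G.childSet b v = G.neighborSet v \ {u} := by
  ext w
  refine ⟨fun hw => ⟨hw.1, ?_⟩, fun ⟨hw, hwu⟩ => ⟨hw, ?_⟩⟩
  · rintro rfl
    have := hv.2
    have := hw.2
    omega
  · refine (hG.dist_eq_dist_add_one_of_adj b hw).resolve_left fun h => hwu ?_
    exact hG.eq_of_mem_childSet ⟨hw.symm, h⟩ hv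

lemma IsTree.infinite_childSet (hG : G.IsTree) (b : V) {v : V} (hv : (G.neighborSet v).Infinite) :
    (G.childSet b v).Infinite := by
  obtain rfl | hvb := eq_or_ne v b
  · rwa [childSet_self]
  · obtain ⟨u, hu⟩ := hG.connected.exists_mem_childSet hvb
    rw [hG.childSet_eq_of_mem_childSet hu]
    exact hv.sdiff (Set.finite_singleton u)

section descend

variable {α : Type*} {b : V} (e : ∀ v, α ≃ G.childSet b v)

def descend : List α → V
  | [] => b
  | n :: l => e (descend l) n

lemma descend_cons_mem_childSet (n : α) (l : List α) :
    descend e (n :: l) ∈ G.childSet b (descend e l) :=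
  (e _ n).2

lemma dist_descend (l : List α) : G.dist b (descend e l) = l.length := by
  induction l with
  | nil => exact dist_self
  | cons n l ih => rw [(descend_cons_mem_childSet e n l).2, ih, List.length_cons]

lemma IsTree.descend_injective (hG : G.IsTree) : Function.Injective (descend e) := by
  intro x y hxy
  induction x generalizing y with
  | nil =>
    simpa [dist_descend, eq_comm, List.length_eq_zero_iff] using congrArg (G.dist b) hxy
  | cons n x ih =>
    obtain _ | ⟨m, y⟩ := y
    · simpa [dist_descend, List.length_eq_zero_iff] using congrArg (G.dist b) hxy
    · have hm := descend_cons_mem_childSet e m y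
      rw [← hxy] at hm
      obtain rfl := ih (hG.eq_of_mem_childSet (descend_cons_mem_childSet e n x) hm)
      rw [(e _).injective (Subtype.ext hxy)]

lemma Connected.descend_surjective (hG : G.Connected) : Function.Surjective (descend e) := by
  intro v
  induction hd : G.dist b v using Nat.strong_induction_on generalizing v with
  | _ d ih =>
    obtain rfl | hvb := eq_or_ne v b
    · exact ⟨[], rfl⟩
    obtain ⟨u, hu⟩ := hG.exists_mem_childSet hvb
    obtain ⟨l, rfl⟩ := ih _ (by have := hu.2; omega) u rfl
    exact ⟨(e _).symm ⟨v, hu⟩ :: l, by rw [descend, Equiv.apply_symm_apply]⟩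

lemma IsTree.eq_cons_of_adj_descend (hG : G.IsTree) {x y : List α}
    (h : G.Adj (descend e x) (descend e y))
    (hd : G.dist b (descend e y) = G.dist b (descend e x) + 1) : ∃ n, y = n :: x := by
  obtain _ | ⟨n, y⟩ := y
  · simp [dist_descend] at hd
  · refine ⟨n, congrArg _ (hG.descend_injective e ?_)⟩
    exact hG.eq_of_mem_childSet (descend_cons_mem_childSet e n y) ⟨h, hd⟩

lemma IsTree.adj_descend_iff (hG : G.IsTree) {x y : List α} :
    G.Adj (descend e x) (descend e y) ↔ (listTree α).Adj x y := by
  refine ⟨fun h => ?_, ?_⟩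
  · rcases hG.dist_eq_dist_add_one_of_adj b h with hd | hd
    · exact Or.inl (hG.eq_cons_of_adj_descend e h.symm hd)
    · exact Or.inr (hG.eq_cons_of_adj_descend e h hd)
  · rintro (⟨n, rfl⟩ | ⟨n, rfl⟩)
    · exact (descend_cons_mem_childSet e n y).1.symm
    · exact (descend_cons_mem_childSet e n x).1

end descend

lemma IsTree.exists_iso_listTree {α : Type*} (hG : G.IsTree) (b : V)
    (he : ∀ v, Nonempty (α ≃ G.childSet b v)) : ∃ ψ : listTree α ≃g G, ψ [] = b := by
  let e v := (he v).some
  have hbij : Function.Bijective (descend e) :=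
    ⟨hG.descend_injective e, hG.connected.descend_surjective e⟩
  exact ⟨⟨.ofBijective (descend e) hbij, hG.adj_descend_iff e⟩, rfl⟩

lemma IsTree.nonempty_equiv_childSet (hG : G.IsTree) (b : V) {v : V}
    (hc : Countable (G.neighborSet v)) (hi : Infinite (G.neighborSet v)) :
    Nonempty (ℕ ≃ G.childSet b v) := by
  have : Countable (G.childSet b v) :=
    ((Set.countable_coe_iff.1 hc).mono fun _ hw => hw.1).to_subtype
  have : Infinite (G.childSet b v) :=
    (hG.infinite_childSet b (Set.infinite_coe_iff.1 hi)).to_subtype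
  obtain ⟨_⟩ := nonempty_denumerable (G.childSet b v)
  exact ⟨(Denumerable.eqv _).symm⟩

end SimpleGraph

/-- In a connected acyclic simple graph all of whose vertices have countably infinite
degree, any two neighbors `a`, `a'` of a vertex `b` are conjugate by an automorphism
fixing `b`. -/
theorem tree_aut_transitive_on_neighbors {V : Type*} (G : SimpleGraph V)
    (hconn : G.Connected) (hacyc : G.IsAcyclic)
    (hdeg : ∀ v : V, Countable (G.neighborSet v) ∧ Infinite (G.neighborSet v))
    (b a a' : V) (ha : G.Adj b a) (ha' : G.Adj b a') :
    ∃ f : G ≃g G, f b = b ∧ f a = a' := by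
  have hG : G.IsTree := ⟨hconn, hacyc⟩
  obtain ⟨ψ, hψ⟩ :=
    hG.exists_iso_listTree b fun v => hG.nonempty_equiv_childSet b (hdeg v).1 (hdeg v).2
  have hb : ψ.symm b = [] := ψ.symm_apply_eq.2 hψ.symm
  have adj_root {x : V} (hx : G.Adj b x) : (SimpleGraph.listTree ℕ).Adj [] (ψ.symm x) :=
    hb ▸ ψ.symm.map_adj_iff.2 hx
  obtain ⟨f, hf₀, hf⟩ :=
    SimpleGraph.listTree.exists_iso_of_adj_nil (adj_root ha) (adj_root ha')
  exact ⟨ψ.symm.trans (f.trans ψ), by simp [hb, hf₀, hψ], by simp [hf]⟩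
end

section
/- Let G be a group acting on types α and β, and let R : α → β → Prop be G-equivariant, i.e., for all g ∈ G, a ∈ α, b ∈ β, R (g • a) (g • b) ↔ R a b. Suppose there is n : ℕ such that for every a ∈ α the set { b | R a b } is finite with at most n elements. Let b ∈ β be such that X := { a | R a b } is nonempty. If the orbit { g • b | g ∈ G } is infinite, then the collection of sets { (g • ·) '' X | g ∈ G } is infinite. -/
/-- Let a group `G` act on `α` and `β`, and let `R : α → β → Prop` be `G`-equivariant.
Suppose there is `n : ℕ` bounding the (finite) number of `b`'s related to each `a`.
If `X = {a | R a b}` is nonempty and the orbit of `b` is infinite, then the family of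
translates of `X` is infinite. -/
theorem equivariant_relation_orbit_infinite {G α β : Type*} [Group G]
    [MulAction G α] [MulAction G β] (R : α → β → Prop)
    (hequiv : ∀ (g : G) (a : α) (b : β), R (g • a) (g • b) ↔ R a b)
    (n : ℕ) (hbound : ∀ a : α, {b : β | R a b}.Finite ∧ {b : β | R a b}.ncard ≤ n)
    (b : β) (hne : {a : α | R a b}.Nonempty)
    (horbit : {b' : β | ∃ g : G, g • b = b'}.Infinite) :
    {Y : Set α | ∃ g : G, (fun a => g • a) '' {a : α | R a b} = Y}.Infinite := by
  obtain ⟨a0, ha0⟩ := hne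
  set F : β → Set α := fun b' => {a | R a b'} with hF
  have key : ∀ g : G, (fun a => g • a) '' {a : α | R a b} = F (g • b) := by
    intro g
    ext a
    simp only [Set.mem_image, Set.mem_setOf_eq, hF]
    constructor
    · rintro ⟨x, hx, rfl⟩
      rwa [hequiv]
    · intro h
      exact ⟨g⁻¹ • a, (hequiv g (g⁻¹ • a) b).mp (by rw [smul_inv_smul]; exact h), smul_inv_smul g a⟩
  have himg : {Y : Set α | ∃ g : G, (fun a => g • a) '' {a : α | R a b} = Y}
      = F '' {b' | ∃ g : G, g • b = b'} := by
    ext Y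
    simp only [Set.mem_setOf_eq, Set.mem_image]
    constructor
    · rintro ⟨g, rfl⟩; exact ⟨g • b, ⟨g, rfl⟩, (key g).symm⟩
    · rintro ⟨b', ⟨g, rfl⟩, rfl⟩; exact ⟨g, key g⟩
  rw [himg]
  intro hfin
  refine horbit (Set.Finite.subset (Set.Finite.biUnion hfin
    (t := fun Y => {c | (∃ g : G, g • b = c) ∧ F c = Y}) ?_) ?_)
  · rintro Y hY
    obtain ⟨b', ⟨g, rfl⟩, rfl⟩ := hY
    have ha : R (g • a0) (g • b) := (hequiv g a0 b).mpr ha0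
    refine Set.Finite.subset (hbound (g • a0)).1 ?_
    rintro c ⟨hc, hFc⟩
    have : g • a0 ∈ F c := hFc ▸ ha
    exact this
  · intro c hc
    exact Set.mem_biUnion ⟨c, hc, rfl⟩ ⟨hc, rfl⟩
end
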